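/- arXiv:1605.00568 — 3 statements merged into one kernel-verified Lean document; each statement's English description precedes it below -/
import Mathlib

section
/- Let Ω ⊂ ℝ^d be a bounded open set, let s ∈ S be a measure-preserving map, let φ : Ω → ℝ be a convex differentiable function, and set m = ∇φ ∘ s ∈ L²(Ω, ℝ^d). Then for every vector field w ∈ L²(Ω, ℝ^d) which is divergence-free with vanishing normal trace (that is, ∫_Ω ⟨w(x), ∇q(x)⟩ dx = 0 for every continuously differentiable q : Ω → ℝ with bounded gradient), one has ∫_Ω ⟨m(x) − s(x), w(s(x))⟩ dx = 0; in other words m − s is orthogonal in L² to the set {w ∘ s : w divergence-free with vanishing normal trace}. -/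
/-!
Write `∇φ(y) - y = ∇ψ(y)` with `ψ = φ - ‖·‖²/2`. A convex differentiable function on a
finite-dimensional space is `C¹`: the derivative in direction `v` is an infimum of continuous
difference quotients, hence upper semicontinuous, and so is its negative, the derivative in
direction `-v`. Thus `ψ` is `C¹`, and multiplying it by a bump function equal to `1` on a ball
containing `Ω` gives an admissible test function, hence `∫_Ω ⟨w, ∇φ - id⟩ = 0`. The change of
variables `y = s x`, valid since `s` preserves the measure, turns this into the claim.
-/

open MeasureTheory Set Metric InnerProductSpace
open scoped RealInnerProductSpace Topology

section Convex

variable {E : Type*} [NormedAddCommGroup E] [NormedSpace ℝ E] {φ : E → ℝ}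

theorem ConvexOn.fderiv_apply_le_sub (hφ : ConvexOn ℝ univ φ) {x : E}
    (hd : DifferentiableAt ℝ φ x) (v : E) : fderiv ℝ φ x v ≤ φ (x + v) - φ x := by
  have hline : ConvexOn ℝ univ fun t : ℝ => φ (x + t • v) := by
    simpa [Function.comp_def] using
      (hφ.translate_right x).comp_linearMap (LinearMap.toSpanSingleton ℝ E v)
  have := hline.le_slope_of_hasDerivAt (mem_univ 0) (mem_univ 1) one_pos
    (hd.hasFDerivAt.hasLineDerivAt v)
  simpa [slope_def_field] using this

theorem ConvexOn.eventually_fderiv_apply_lt (hφ : ConvexOn ℝ univ φ)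
    (hφd : Differentiable ℝ φ) {x v : E} {a : ℝ} (ha : fderiv ℝ φ x v < a) :
    ∀ᶠ y in 𝓝 x, fderiv ℝ φ y v < a := by
  obtain ⟨t, ht, hslope⟩ : ∃ t : ℝ, 0 < t ∧ t⁻¹ * (φ (x + t • v) - φ x) < a :=
    (((hφd x).hasFDerivAt.hasLineDerivAt v).tendsto_slope_zero_right.eventually
      (gt_mem_nhds ha)).and self_mem_nhdsWithin |>.exists.imp fun t h => ⟨h.2, h.1⟩
  have hcont : Continuous fun y => t⁻¹ * (φ (y + t • v) - φ y) := by
    have := hφd.continuous; fun_prop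
  filter_upwards [hcont.continuousAt.eventually (gt_mem_nhds hslope)] with y hy
  refine lt_of_le_of_lt ?_ hy
  rw [le_inv_mul_iff₀ ht, ← smul_eq_mul, ← map_smul]
  exact hφ.fderiv_apply_le_sub (hφd y) _

theorem ConvexOn.continuous_fderiv [FiniteDimensional ℝ E] (hφ : ConvexOn ℝ univ φ)
    (hφd : Differentiable ℝ φ) : Continuous (fderiv ℝ φ) := by
  refine continuous_clm_apply.2 fun v => continuous_iff_continuousAt.2 fun x =>
    tendsto_order.2 ⟨fun a ha => ?_, fun a ha => hφ.eventually_fderiv_apply_lt hφd ha⟩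
  have hneg : fderiv ℝ φ x (-v) < -a := by rw [map_neg]; exact neg_lt_neg ha
  filter_upwards [hφ.eventually_fderiv_apply_lt hφd hneg] with y hy
  rw [map_neg] at hy
  exact neg_lt_neg_iff.1 hy

theorem ConvexOn.contDiff_one [FiniteDimensional ℝ E] (hφ : ConvexOn ℝ univ φ)
    (hφd : Differentiable ℝ φ) : ContDiff ℝ 1 φ :=
  contDiff_one_iff_fderiv.2 ⟨hφd, hφ.continuous_fderiv hφd⟩

end Convex

section Gradient

variable {E : Type*} [NormedAddCommGroup E] [InnerProductSpace ℝ E] [CompleteSpace E]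

theorem hasGradientAt_half_norm_sq (x : E) : HasGradientAt (fun y : E => ‖y‖ ^ 2 / 2) x x := by
  rw [hasGradientAt_iff_hasFDerivAt]
  have h := (hasStrictFDerivAt_norm_sq x).hasFDerivAt.const_mul (2⁻¹ : ℝ)
  rw [two_nsmul, ← two_smul ℝ, smul_smul, inv_mul_cancel₀ two_ne_zero, one_smul] at h
  simp only [div_eq_inv_mul]
  exact h

theorem gradient_sub_half_norm_sq {φ : E → ℝ} {x : E} (hφ : DifferentiableAt ℝ φ x) :
    gradient (fun y => φ y - ‖y‖ ^ 2 / 2) x = gradient φ x - x := by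
  refine HasGradientAt.gradient ?_
  rw [hasGradientAt_iff_hasFDerivAt, map_sub]
  exact hφ.hasGradientAt.hasFDerivAt.sub (hasGradientAt_half_norm_sq x).hasFDerivAt

theorem ContDiff.continuous_gradient {φ : E → ℝ} (hφ : ContDiff ℝ 1 φ) :
    Continuous (gradient φ) :=
  (toDual ℝ E).symm.continuous.comp (hφ.continuous_fderiv one_ne_zero)

theorem HasCompactSupport.exists_bound_norm_gradient {q : E → ℝ} (hq : ContDiff ℝ 1 q)
    (hsupp : HasCompactSupport q) : ∃ C, ∀ x, ‖gradient q x‖ ≤ C := by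
  obtain ⟨C, hC⟩ :=
    (hsupp.fderiv ℝ).exists_bound_of_continuous (hq.continuous_fderiv one_ne_zero)
  exact ⟨C, fun x => by rw [gradient, LinearIsometryEquiv.norm_map]; exact hC x⟩

end Gradient

theorem ContDiff.exists_hasCompactSupport_eqOn_ball {E : Type*} [NormedAddCommGroup E]
    [NormedSpace ℝ E] [FiniteDimensional ℝ E] [HasContDiffBump E] {n : ℕ∞} {ψ : E → ℝ}
    (hψ : ContDiff ℝ n ψ) (c : E) (R : ℝ) :
    ∃ q : E → ℝ, ContDiff ℝ n q ∧ HasCompactSupport q ∧ EqOn q ψ (ball c R) := by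
  let bump : ContDiffBump c := ⟨max R 1, max R 1 + 1, by positivity, lt_add_one _⟩
  refine ⟨fun y => bump y * ψ y, bump.contDiff.mul hψ, bump.hasCompactSupport.mul_right,
    fun y hy => ?_⟩
  have hy' : y ∈ closedBall c bump.rIn :=
    ball_subset_closedBall (ball_subset_ball (le_max_left _ _) hy)
  simp [bump.one_of_mem_closedBall hy']

theorem integral_comp_of_map_eq {α G : Type*} [MeasurableSpace α] [NormedAddCommGroup G]
    [NormedSpace ℝ G] {μ : Measure α} {s : α → α} (hs : μ.map s = μ) {f : α → G}
    (hf : AEStronglyMeasurable f μ) : ∫ x, f (s x) ∂μ = ∫ x, f x ∂μ := by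
  by_cases hsm : AEMeasurable s μ
  · conv_rhs => rw [← hs]
    exact (integral_map hsm (hs.symm ▸ hf)).symm
  · have hμ : μ = 0 := by rw [← hs, Measure.map_of_not_aemeasurable hsm]
    simp [hμ]

theorem integral_inner_gradient_eq_zero_of_isBounded {E : Type*} [NormedAddCommGroup E]
    [InnerProductSpace ℝ E] [FiniteDimensional ℝ E] [MeasurableSpace E] [BorelSpace E]
    {μ : Measure E} {Ω : Set E} (hΩ : Bornology.IsBounded Ω) {w : E → E}
    (hw : ∀ q : E → ℝ, ContDiff ℝ 1 q → (∃ C : ℝ, ∀ x, ‖gradient q x‖ ≤ C) →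
      ∫ x in Ω, ⟪w x, gradient q x⟫ ∂μ = 0)
    {ψ : E → ℝ} (hψ : ContDiff ℝ 1 ψ) : ∫ x in Ω, ⟪w x, gradient ψ x⟫ ∂μ = 0 := by
  obtain ⟨R, hΩR⟩ := hΩ.subset_ball (0 : E)
  obtain ⟨q, hq, hq_supp, hqψ⟩ := hψ.exists_hasCompactSupport_eqOn_ball 0 R
  have hΩ_ae : ∀ᵐ x ∂μ.restrict Ω, x ∈ ball (0 : E) R :=
    ae_mono (Measure.restrict_mono hΩR le_rfl) (ae_restrict_mem measurableSet_ball)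
  rw [← hw q hq (hq_supp.exists_bound_norm_gradient hq)]
  refine integral_congr_ae ?_
  filter_upwards [hΩ_ae] with x hx
  rw [(hqψ.eventuallyEq_of_mem (isOpen_ball.mem_nhds hx)).gradient_eq]

theorem stmt3_general {d : ℕ} (Ω : Set (EuclideanSpace ℝ (Fin d)))
    (hΩb : Bornology.IsBounded Ω)
    (s : EuclideanSpace ℝ (Fin d) → EuclideanSpace ℝ (Fin d))
    (hs : Measure.map s (volume.restrict Ω) = volume.restrict Ω)
    (φ : EuclideanSpace ℝ (Fin d) → ℝ)
    (hφc : ConvexOn ℝ Set.univ φ) (hφd : Differentiable ℝ φ)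
    (w : EuclideanSpace ℝ (Fin d) → EuclideanSpace ℝ (Fin d))
    (hw : MemLp w 2 (volume.restrict Ω))
    (hwdiv : ∀ q : EuclideanSpace ℝ (Fin d) → ℝ, ContDiff ℝ 1 q →
      (∃ C : ℝ, ∀ x, ‖gradient q x‖ ≤ C) →
      ∫ x in Ω, ⟪w x, gradient q x⟫ = 0) :
    ∫ x in Ω, ⟪gradient φ (s x) - s x, w (s x)⟫ = 0 := by
  have hφ1 : ContDiff ℝ 1 φ := hφc.contDiff_one hφd
  have horth : ∫ y in Ω, ⟪w y, gradient φ y - y⟫ = 0 := by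
    simpa only [gradient_sub_half_norm_sq (hφd _)] using
      integral_inner_gradient_eq_zero_of_isBounded hΩb hwdiv
        (hφ1.sub ((contDiff_norm_sq ℝ).div_const 2))
  have hmeas : AEStronglyMeasurable (fun y => ⟪gradient φ y - y, w y⟫) (volume.restrict Ω) :=
    (hφ1.continuous_gradient.sub continuous_id).aestronglyMeasurable.inner
      hw.aestronglyMeasurable
  rw [integral_comp_of_map_eq hs hmeas]
  simpa only [real_inner_comm] using horth

/-- **Orthogonality relation in the polar factorization.**
Let `Ω ⊂ ℝ^d` be a bounded open set, `s` a measure-preserving map of `Ω`, `φ` a convex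
differentiable function and `m = ∇φ ∘ s ∈ L²(Ω, ℝ^d)`.  Then for every square-integrable
vector field `w` which is divergence-free with vanishing normal trace in the weak sense
(`∫_Ω ⟨w, ∇q⟩ = 0` for every `C¹` function `q : Ω → ℝ` with bounded gradient), one has
`∫_Ω ⟨m(x) − s(x), w(s(x))⟩ dx = 0`; i.e. `m − s` is `L²`-orthogonal to `{w ∘ s}`. -/
theorem stmt3 {d : ℕ} (Ω : Set (EuclideanSpace ℝ (Fin d))) (hΩo : IsOpen Ω)
    (hΩb : Bornology.IsBounded Ω)
    (s : EuclideanSpace ℝ (Fin d) → EuclideanSpace ℝ (Fin d))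
    (hs : Measure.map s (volume.restrict Ω) = volume.restrict Ω)
    (φ : EuclideanSpace ℝ (Fin d) → ℝ)
    (hφc : ConvexOn ℝ Set.univ φ) (hφd : Differentiable ℝ φ)
    (hm : MemLp (fun x => gradient φ (s x)) 2 (volume.restrict Ω))
    (w : EuclideanSpace ℝ (Fin d) → EuclideanSpace ℝ (Fin d))
    (hw : MemLp w 2 (volume.restrict Ω))
    (hwdiv : ∀ q : EuclideanSpace ℝ (Fin d) → ℝ, ContDiff ℝ 1 q →
      (∃ C : ℝ, ∀ x, ‖gradient q x‖ ≤ C) →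
      ∫ x in Ω, ⟪w x, gradient q x⟫ = 0) :
    ∫ x in Ω, ⟪gradient φ (s x) - s x, w (s x)⟫ = 0 :=
  stmt3_general Ω hΩb s hs φ hφc hφd w hw hwdiv
end

section
/- Let Ω ⊂ ℝ^d be a bounded open set with an equal-volume partition (ω_i)_{1≤i≤N}, let ε, τ > 0, and let (M^n, V^n)_{n≥0} in M_N be generated by the symplectic Euler scheme. Define the discrete Hamiltonian H^n = ½‖V^n‖²_M + d_S(M^n)²/(2ε²). Then for every n ≥ 0, (1 − τ²/ε²) H^{n+1} ≤ H^n. -/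
open MeasureTheory
open scoped RealInnerProductSpace

noncomputable section

/-- The set `S ⊆ L²(Ω, ℝ^d)` of measure-preserving maps: those `s` with `s_#Leb = Leb`,
where `Leb` is the restriction of the Lebesgue measure to `Ω`. -/
def MPmaps {d : ℕ} (Ω : Set (EuclideanSpace ℝ (Fin d))) :
    Set (Lp (EuclideanSpace ℝ (Fin d)) 2 (volume.restrict Ω)) :=
  {s | Measure.map s (volume.restrict Ω) = volume.restrict Ω}

/-- The linear subspace `M_N ⊆ L²(Ω, ℝ^d)` of maps that are (a.e.) constant on each cell
`ω_i` of the partition. -/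
def PiecewiseConst {d N : ℕ} (Ω : Set (EuclideanSpace ℝ (Fin d)))
    (ω : Fin N → Set (EuclideanSpace ℝ (Fin d))) :
    Set (Lp (EuclideanSpace ℝ (Fin d)) 2 (volume.restrict Ω)) :=
  {f | ∀ i, ∃ c : EuclideanSpace ℝ (Fin d),
    ∀ᵐ x ∂((volume.restrict Ω).restrict (ω i)), f x = c}

/-!
Since `V^{n+1}` lies in `M_N`, orthogonality of the projection gives
`⟪s^n - P s^n, V^{n+1}⟫ = 0`, so `⟪M^n - s^n, V^{n+1}⟫ = ⟪M^n - P s^n, V^{n+1}⟫`. Using the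
old closest point `s^n` as a competitor for `d_S(M^{n+1})`, the cross term of
`‖M^n + τ V^{n+1} - s^n‖²` then cancels against the one of `‖V^{n+1} + (τ/ε²)(M^n - P s^n)‖²`,
and what is left over is the term `τ²‖V^{n+1}‖²/ε²`, absorbed by the factor `1 - τ²/ε²`.
-/

section PiecewiseConst

variable {d N : ℕ} (Ω : Set (EuclideanSpace ℝ (Fin d)))
  (ω : Fin N → Set (EuclideanSpace ℝ (Fin d)))

def piecewiseConstSubmodule :
    Submodule ℝ (Lp (EuclideanSpace ℝ (Fin d)) 2 (volume.restrict Ω)) where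
  carrier := PiecewiseConst Ω ω
  add_mem' {f g} hf hg i := by
    obtain ⟨c, hc⟩ := hf i
    obtain ⟨c', hc'⟩ := hg i
    refine ⟨c + c', ?_⟩
    filter_upwards [ae_restrict_of_ae (Lp.coeFn_add f g), hc, hc'] with x hx hfx hgx
    rw [hx, Pi.add_apply, hfx, hgx]
  zero_mem' i := ⟨0, ae_restrict_of_ae (Lp.coeFn_zero _ _ _)⟩
  smul_mem' r f hf i := by
    obtain ⟨c, hc⟩ := hf i
    refine ⟨r • c, ?_⟩
    filter_upwards [ae_restrict_of_ae (Lp.coeFn_smul r f), hc] with x hx hfx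
    rw [hx, Pi.smul_apply, hfx]

end PiecewiseConst

section SymplecticEuler

variable {E : Type*}

theorem symplecticEuler_mem_of_mem [AddCommGroup E] [Module ℝ E] (K : Submodule ℝ E)
    {P : E → E} {M V s : ℕ → E} {a τ : ℝ} (hP : ∀ f, P f ∈ K) (hM0 : M 0 ∈ K)
    (hV0 : V 0 ∈ K) (hVrec : ∀ n, V (n + 1) = V n - a • (M n - P (s n)))
    (hMrec : ∀ n, M (n + 1) = M n + τ • V (n + 1)) (n : ℕ) :
    M n ∈ K ∧ V n ∈ K := by
  induction n with
  | zero => exact ⟨hM0, hV0⟩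
  | succ n ih =>
    have hV : V (n + 1) ∈ K := by
      rw [hVrec]
      exact K.sub_mem ih.2 (K.smul_mem a (K.sub_mem ih.1 (hP _)))
    exact ⟨by rw [hMrec]; exact K.add_mem ih.1 (K.smul_mem τ hV), hV⟩

variable [NormedAddCommGroup E] [InnerProductSpace ℝ E]

theorem norm_sq_add_two_mul_inner_le_of_eq_add_smul {v v' g : E} (a : ℝ)
    (hv : v = v' + a • g) : ‖v'‖ ^ 2 + 2 * a * ⟪g, v'⟫ ≤ ‖v‖ ^ 2 := by
  rw [hv, norm_add_sq_real, real_inner_smul_right, norm_smul, mul_pow, Real.norm_eq_abs,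
    sq_abs, real_inner_comm]
  nlinarith [sq_nonneg a, sq_nonneg ‖g‖]

theorem infDist_sq_le_of_eq_add_smul {S : Set E} {m m' v' s p : E} {τ : ℝ} (hs : s ∈ S)
    (hd : ‖m - s‖ = Metric.infDist m S) (horth : ⟪s - p, v'⟫ = 0)
    (hm' : m' = m + τ • v') :
    Metric.infDist m' S ^ 2
      ≤ Metric.infDist m S ^ 2 + 2 * τ * ⟪m - p, v'⟫ + τ ^ 2 * ‖v'‖ ^ 2 := by
  have hcross : ⟪m - s, v'⟫ = ⟪m - p, v'⟫ := by
    rw [← sub_sub_sub_cancel_right m s p, inner_sub_left, horth, sub_zero]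
  have hdist : Metric.infDist m' S ≤ ‖m - s + τ • v'‖ := by
    rw [← show m' - s = m - s + τ • v' by rw [hm']; abel, ← dist_eq_norm]
    exact Metric.infDist_le_dist_of_mem hs
  calc Metric.infDist m' S ^ 2 ≤ ‖m - s + τ • v'‖ ^ 2 :=
        pow_le_pow_left₀ Metric.infDist_nonneg hdist 2
    _ = _ := by
      rw [norm_add_sq_real, real_inner_smul_right, norm_smul, mul_pow, Real.norm_eq_abs,
        sq_abs, hcross, hd]
      ring

theorem symplecticEuler_hamiltonian_le {S : Set E} {m v m' v' s p : E} {ε τ : ℝ}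
    (hε : ε ≠ 0) (hs : s ∈ S) (hd : ‖m - s‖ = Metric.infDist m S)
    (horth : ⟪s - p, v'⟫ = 0) (hv' : v' = v - (τ / ε ^ 2) • (m - p))
    (hm' : m' = m + τ • v') :
    (1 - τ ^ 2 / ε ^ 2) *
        ((1 / 2) * ‖v'‖ ^ 2 + Metric.infDist m' S ^ 2 / (2 * ε ^ 2))
      ≤ (1 / 2) * ‖v‖ ^ 2 + Metric.infDist m S ^ 2 / (2 * ε ^ 2) := by
  have hkin := norm_sq_add_two_mul_inner_le_of_eq_add_smul (τ / ε ^ 2)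
    (show v = v' + (τ / ε ^ 2) • (m - p) by rw [hv']; abel)
  have hpot := infDist_sq_le_of_eq_add_smul hs hd horth hm'
  have hε2 : 0 < ε ^ 2 := by positivity
  set X := ‖v'‖ ^ 2
  set D' := Metric.infDist m' S ^ 2
  have hmod : (ε ^ 2 - τ ^ 2) * X + D' ≤ ε ^ 2 * ‖v‖ ^ 2 + Metric.infDist m S ^ 2 := by
    have := mul_le_mul_of_nonneg_left hkin hε2.le
    rw [mul_add, show ε ^ 2 * (2 * (τ / ε ^ 2) * ⟪m - p, v'⟫) = 2 * τ * ⟪m - p, v'⟫ by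
      field_simp] at this
    linarith
  have hD' : 0 ≤ D' := sq_nonneg _
  field_simp
  rw [div_le_div_iff₀ (by positivity) hε2]
  nlinarith [mul_le_mul_of_nonneg_left hmod hε2.le, mul_nonneg (sq_nonneg τ) hD']

end SymplecticEuler

theorem stmt6_general {d N : ℕ}
    (Ω : Set (EuclideanSpace ℝ (Fin d)))
    (ω : Fin N → Set (EuclideanSpace ℝ (Fin d)))
    (ε τ : ℝ) (hε : 0 < ε)
    (M V s : ℕ → Lp (EuclideanSpace ℝ (Fin d)) 2 (volume.restrict Ω))
    (PN : Lp (EuclideanSpace ℝ (Fin d)) 2 (volume.restrict Ω) →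
          Lp (EuclideanSpace ℝ (Fin d)) 2 (volume.restrict Ω))
    (hPNmem : ∀ f, PN f ∈ PiecewiseConst Ω ω)
    (hPNorth : ∀ f, ∀ g ∈ PiecewiseConst Ω ω, ⟪f - PN f, g⟫ = 0)
    (hM0 : M 0 ∈ PiecewiseConst Ω ω) (hV0 : V 0 ∈ PiecewiseConst Ω ω)
    (hsS : ∀ n, s n ∈ MPmaps Ω)
    (hsproj : ∀ n, ‖M n - s n‖ = Metric.infDist (M n) (MPmaps Ω))
    (hVrec : ∀ n, V (n + 1) = V n - (τ / ε ^ 2) • (M n - PN (s n)))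
    (hMrec : ∀ n, M (n + 1) = M n + τ • V (n + 1)) :
    ∀ n : ℕ,
      (1 - τ ^ 2 / ε ^ 2) *
          ((1 / 2) * ‖V (n + 1)‖ ^ 2
            + Metric.infDist (M (n + 1)) (MPmaps Ω) ^ 2 / (2 * ε ^ 2))
        ≤ (1 / 2) * ‖V n‖ ^ 2
            + Metric.infDist (M n) (MPmaps Ω) ^ 2 / (2 * ε ^ 2) := by
  intro n
  have hV : V (n + 1) ∈ PiecewiseConst Ω ω :=
    (symplecticEuler_mem_of_mem (piecewiseConstSubmodule Ω ω) hPNmem hM0 hV0 hVrec hMrec _).2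
  exact symplecticEuler_hamiltonian_le hε.ne' (hsS n) (hsproj n) (hPNorth (s n) _ hV)
    (hVrec n) (hMrec n)

/-- **One-step decay of the discrete Hamiltonian for the symplectic Euler scheme.**
Let `Ω ⊂ ℝ^d` be a bounded open set with an equal-volume partition `(ω_i)_{1≤i≤N}`, let
`ε, τ > 0`, and let `(Mₙ, Vₙ)` in `M_N` be generated by the symplectic Euler scheme
`V_{n+1} = Vₙ − (τ/ε²)(Mₙ − P_{M_N}(sₙ))`, `M_{n+1} = Mₙ + τ V_{n+1}`, where `sₙ` is a
closest point to `Mₙ` in the set `S` of measure-preserving maps and `P_{M_N}` is the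
orthogonal projection onto `M_N`.  With `Hₙ = ½‖Vₙ‖² + d_S(Mₙ)²/(2ε²)`, one has
`(1 − τ²/ε²) H_{n+1} ≤ Hₙ` for every `n ≥ 0`. -/
theorem stmt6 {d N : ℕ} (hN : 0 < N)
    (Ω : Set (EuclideanSpace ℝ (Fin d))) (hΩo : IsOpen Ω) (hΩb : Bornology.IsBounded Ω)
    (ω : Fin N → Set (EuclideanSpace ℝ (Fin d)))
    (hωmeas : ∀ i, MeasurableSet (ω i))
    (hωsub : ∀ i, ω i ⊆ Ω)
    (hωdisj : Pairwise fun i j => volume (ω i ∩ ω j) = 0)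
    (hωcover : volume (Ω \ ⋃ i, ω i) = 0)
    (hωvol : ∀ i, volume (ω i) = volume Ω / N)
    (ε τ : ℝ) (hε : 0 < ε) (hτ : 0 < τ)
    (M V s : ℕ → Lp (EuclideanSpace ℝ (Fin d)) 2 (volume.restrict Ω))
    (PN : Lp (EuclideanSpace ℝ (Fin d)) 2 (volume.restrict Ω) →
          Lp (EuclideanSpace ℝ (Fin d)) 2 (volume.restrict Ω))
    (hPNmem : ∀ f, PN f ∈ PiecewiseConst Ω ω)
    (hPNorth : ∀ f, ∀ g ∈ PiecewiseConst Ω ω, ⟪f - PN f, g⟫ = 0)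
    (hM0 : M 0 ∈ PiecewiseConst Ω ω) (hV0 : V 0 ∈ PiecewiseConst Ω ω)
    (hsS : ∀ n, s n ∈ MPmaps Ω)
    (hsproj : ∀ n, ‖M n - s n‖ = Metric.infDist (M n) (MPmaps Ω))
    (hVrec : ∀ n, V (n + 1) = V n - (τ / ε ^ 2) • (M n - PN (s n)))
    (hMrec : ∀ n, M (n + 1) = M n + τ • V (n + 1)) :
    ∀ n : ℕ,
      (1 - τ ^ 2 / ε ^ 2) *
          ((1 / 2) * ‖V (n + 1)‖ ^ 2
            + Metric.infDist (M (n + 1)) (MPmaps Ω) ^ 2 / (2 * ε ^ 2))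
        ≤ (1 / 2) * ‖V n‖ ^ 2
            + Metric.infDist (M n) (MPmaps Ω) ^ 2 / (2 * ε ^ 2) :=
  stmt6_general Ω ω ε τ hε M V s PN hPNmem hPNorth hM0 hV0 hsS hsproj hVrec hMrec
end
end

section
/- Let Ω ⊂ ℝ^d be a bounded connected open set with an equal-volume partition (ω_i)_{1≤i≤N}, let m ∈ M_N take the pairwise distinct values M_i on ω_i, and let ψ ∈ ℝ^N satisfy Leb(Lag_i(M, ψ) ∩ Ω) = Leb(Ω)/N for all i; write L_i = Lag_i(M, ψ) ∩ Ω. Then the squared distance from m to the set of measure-preserving maps equals d_S(m)² = Σ_{i=1}^N ∫_{L_i} ‖x − M_i‖² dx. -/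
/-!
The sets `L i = Lag M ψ i ∩ Ω` partition `Ω` up to null sets (two Laguerre cells meet inside a
hyperplane), and `|L i| = |ω i|`.

Lower bound (weak Kantorovich duality): let `φ y = min_j (‖y - M j‖² + ψ j)`. For a
measure-preserving `s` and `x ∈ ω i` we have `‖m x - s x‖² ≥ φ (s x) - ψ i`; integrating and using
`s_# Leb = Leb` gives `‖m - s‖² ≥ ∫_Ω φ - Σ_i ψ i |ω i| = Σ_i ∫_{L i} ‖y - M i‖²`, because
`φ = ‖· - M i‖² + ψ i` on `L i`.

Upper bound: in positive dimension, Lebesgue measure on `ω i` and on `L i` are atomless finite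
measures of equal mass on a standard Borel space, so a measurable `τ i` pushes the first onto the
second (through the uniform measure on `[0, 1]`: the cdf after a Borel embedding into `ℝ`, then a
quantile map). Gluing the `τ i` gives a measure-preserving map at which the lower bound is
attained.
-/

open MeasureTheory

noncomputable section

/-- The Laguerre cell of index `i` associated to sites `M` and weights `ψ`. -/
def Lag {d N : ℕ} (M : Fin N → EuclideanSpace ℝ (Fin d)) (ψ : Fin N → ℝ) (i : Fin N) :
    Set (EuclideanSpace ℝ (Fin d)) :=
  {x | ∀ j : Fin N, ‖x - M i‖ ^ 2 + ψ i ≤ ‖x - M j‖ ^ 2 + ψ j}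

open Set ProbabilityTheory
open scoped RealInnerProductSpace

namespace ProbabilityTheory

def cdfToUnitInterval (μ : Measure ℝ) (t : ℝ) : unitInterval :=
  ⟨cdf μ t, cdf_nonneg μ t, cdf_le_one μ t⟩

lemma measurable_cdfToUnitInterval {μ : Measure ℝ} : Measurable (cdfToUnitInterval μ) :=
  (monotone_cdf μ).measurable.subtype_mk

variable {μ : Measure ℝ} [IsProbabilityMeasure μ] [NullSingletonClass μ]

lemma continuous_cdf : Continuous (cdf μ) := by
  refine continuous_iff_continuousAt.2 fun x => ?_
  rw [(monotone_cdf μ).continuousAt_iff_leftLim_eq_rightLim, (cdf μ).rightLim_eq]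
  have h := (cdf μ).measure_singleton x
  rw [measure_cdf, measure_singleton, eq_comm, ENNReal.ofReal_eq_zero, sub_nonpos] at h
  exact le_antisymm ((monotone_cdf μ).leftLim_le le_rfl) h

lemma measure_setOf_cdf_le {y : ℝ} (hy0 : 0 ≤ y) (hy1 : y < 1) :
    μ {t | cdf μ t ≤ y} = ENNReal.ofReal y := by
  set S := {t | cdf μ t ≤ y}
  rcases S.eq_empty_or_nonempty with hS | hS
  · suffices y = 0 by rw [hS, measure_empty, this, ENNReal.ofReal_zero]
    refine le_antisymm (not_lt.1 fun hy => ?_) hy0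
    obtain ⟨t, ht⟩ := ((tendsto_cdf_atBot μ).eventually_lt_const hy).exists
    exact hS.subset ht.le
  have hbdd : BddAbove S := by
    obtain ⟨b, hb⟩ := ((tendsto_cdf_atTop μ).eventually_const_lt hy1).exists_forall_of_atTop
    exact ⟨b, fun t ht => not_lt.1 fun hbt => (hb t hbt.le).not_ge ht⟩
  have hT : sSup S ∈ S := (isClosed_le continuous_cdf continuous_const).csSup_mem hS hbdd
  have hSeq : S = Iic (sSup S) :=
    Subset.antisymm (fun t ht => le_csSup hbdd ht) fun t ht => (monotone_cdf μ ht).trans hT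
  have hcdfT : cdf μ (sSup S) = y := by
    refine le_antisymm hT ?_
    rcases hy0.eq_or_lt with rfl | hy
    · exact cdf_nonneg μ _
    obtain ⟨t, ht⟩ : y ∈ range (cdf μ) := mem_range_of_exists_le_of_exists_ge continuous_cdf
      (((tendsto_cdf_atBot μ).eventually_lt_const hy).exists.imp fun _ => le_of_lt)
      (((tendsto_cdf_atTop μ).eventually_const_lt hy1).exists.imp fun _ => le_of_lt)
    exact ht ▸ monotone_cdf μ (le_csSup hbdd ht.le)
  rw [hSeq, ← ofReal_cdf, hcdfT]

/-- The probability integral transform. -/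
lemma map_cdfToUnitInterval : μ.map (cdfToUnitInterval μ) = volume := by
  refine Measure.ext_of_Iic _ _ fun x => ?_
  rw [Measure.map_apply measurable_cdfToUnitInterval measurableSet_Iic, unitInterval.volume_Iic]
  rcases x.2.2.lt_or_eq with hx | hx
  · exact measure_setOf_cdf_le x.2.1 hx
  · have : cdfToUnitInterval μ ⁻¹' Iic x = univ :=
      eq_univ_of_forall fun t => show cdf μ t ≤ x from hx ▸ cdf_le_one μ t
    rw [this, measure_univ, hx, ENNReal.ofReal_one]

end ProbabilityTheory

namespace MeasureTheory.Measure

variable {X : Type*} [MeasurableSpace X] [StandardBorelSpace X]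

theorem exists_measurable_map_eq_volume (μ : Measure X) [IsProbabilityMeasure μ]
    [NullSingletonClass μ] : ∃ u : X → unitInterval, Measurable u ∧ μ.map u = volume := by
  have he := measurableEmbedding_embeddingReal X
  have := isProbabilityMeasure_map (μ := μ) he.measurable.aemeasurable
  have : NullSingletonClass (μ.map (embeddingReal X)) := ⟨fun y => by
    rw [he.map_apply]
    exact (subsingleton_singleton.preimage he.injective).measure_zero μ⟩
  refine ⟨cdfToUnitInterval (μ.map (embeddingReal X)) ∘ embeddingReal X,
    measurable_cdfToUnitInterval.comp he.measurable, ?_⟩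
  rw [← Measure.map_map measurable_cdfToUnitInterval he.measurable, map_cdfToUnitInterval]

theorem exists_measurable_map_eq_of_measure_univ_eq (μ ν : Measure X) [IsFiniteMeasure μ]
    [NullSingletonClass μ] (h : μ univ = ν univ) : ∃ τ : X → X, Measurable τ ∧ μ.map τ = ν := by
  rcases eq_zero_or_neZero μ with rfl | hμ
  · refine ⟨id, measurable_id, ?_⟩
    rw [Measure.map_id, eq_comm, ← Measure.measure_univ_eq_zero, ← h, Measure.coe_zero,
      Pi.zero_apply]
  set c := μ univ
  have hc0 : c ≠ 0 := NeZero.ne c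
  have hc : c ≠ ⊤ := measure_ne_top μ univ
  have : Nonempty X := (nonempty_of_measure_ne_zero hc0).to_subtype.map Subtype.val
  have : NullSingletonClass (c⁻¹ • μ) := ⟨fun x => by simp⟩
  have : IsProbabilityMeasure (c⁻¹ • ν) := ⟨by rw [Measure.smul_apply, ← h, smul_eq_mul,
    ENNReal.inv_mul_cancel hc0 hc]⟩
  obtain ⟨u, hu, hμu⟩ := exists_measurable_map_eq_volume (c⁻¹ • μ)
  obtain ⟨f, hf, hνf⟩ := exists_measurable_map_eq (c⁻¹ • ν)
  refine ⟨f ∘ u, hf.comp hu, ?_⟩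
  calc μ.map (f ∘ u) = c • ((c⁻¹ • μ).map u).map f := by
        rw [Measure.map_map hf hu, Measure.map_smul, smul_smul, ENNReal.mul_inv_cancel hc0 hc,
          one_smul]
    _ = ν := by rw [hμu, hνf, smul_smul, ENNReal.mul_inv_cancel hc0 hc, one_smul]

theorem exists_measurable_map_restrict_eq {E : Type*} [NormedAddCommGroup E] [NormedSpace ℝ E]
    [FiniteDimensional ℝ E] [MeasurableSpace E] [BorelSpace E] (μ : Measure E)
    [μ.IsAddHaarMeasure] {A B : Set E} (hAB : μ A = μ B) (hA : μ A ≠ ⊤) :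
    ∃ τ : E → E, Measurable τ ∧ (μ.restrict A).map τ = μ.restrict B := by
  rcases subsingleton_or_nontrivial E with hE | hE
  · -- the only sets are `∅` and `univ`, which `μ` tells apart
    have huniv : μ univ ≠ 0 := isOpen_univ.measure_ne_zero μ univ_nonempty
    refine ⟨id, measurable_id, ?_⟩
    rw [Measure.map_id]
    congr 1
    rcases A.eq_empty_or_nonempty with rfl | hA' <;> rcases B.eq_empty_or_nonempty with rfl | hB'
    · rfl
    · rw [Subsingleton.eq_univ_of_nonempty hB', measure_empty] at hAB; exact absurd hAB.symm huniv
    · rw [Subsingleton.eq_univ_of_nonempty hA', measure_empty] at hAB; exact absurd hAB huniv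
    · rw [Subsingleton.eq_univ_of_nonempty hA', Subsingleton.eq_univ_of_nonempty hB']
  · have := isFiniteMeasure_restrict.2 hA
    exact exists_measurable_map_eq_of_measure_univ_eq _ _ (by simpa using hAB)

end MeasureTheory.Measure

section Partition

open Function

variable {α ι : Type*} [MeasurableSpace α]

structure IsAEPartition (μ : Measure α) (Ω : Set α) (A : ι → Set α) : Prop where
  measurableSet : ∀ i, MeasurableSet (A i)
  aedisjoint : Pairwise (AEDisjoint μ on A)
  iUnion_ae_eq : (⋃ i, A i) =ᵐ[μ] Ω

namespace IsAEPartition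

variable {μ : Measure α} {Ω : Set α} {A : ι → Set α}

lemma ae_le (h : IsAEPartition μ Ω A) (i : ι) : A i ≤ᵐ[μ] Ω :=
  (subset_iUnion A i).eventuallyLE.trans h.iUnion_ae_eq.le

lemma measure_ne_top (h : IsAEPartition μ Ω A) (hΩ : μ Ω ≠ ⊤) (i : ι) : μ (A i) ≠ ⊤ :=
  ne_top_of_le_ne_top hΩ (measure_mono_ae (h.ae_le i))

lemma restrict_eq_sum [Countable ι] (h : IsAEPartition μ Ω A) :
    μ.restrict Ω = Measure.sum fun i => μ.restrict (A i) := by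
  rw [← Measure.restrict_congr_set h.iUnion_ae_eq,
    Measure.restrict_iUnion_ae h.aedisjoint fun i => (h.measurableSet i).nullMeasurableSet]

variable [Fintype ι] {E : Type*} [NormedAddCommGroup E] [NormedSpace ℝ E]

lemma integral_eq_sum (h : IsAEPartition μ Ω A) {F : α → E} (hF : IntegrableOn F Ω μ) :
    ∫ x in Ω, F x ∂μ = ∑ i, ∫ x in A i, F x ∂μ := by
  rw [IntegrableOn, h.restrict_eq_sum] at hF
  rw [h.restrict_eq_sum, integral_sum_measure hF, tsum_fintype]

lemma sum_integral_sub_const (h : IsAEPartition μ Ω A) {F : α → ℝ} (hF : IntegrableOn F Ω μ)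
    (hΩ : μ Ω ≠ ⊤) (c : ι → ℝ) :
    ∑ i, ∫ x in A i, (F x - c i) ∂μ = ∫ x in Ω, F x ∂μ - ∑ i, μ.real (A i) * c i := by
  rw [h.integral_eq_sum hF, ← Finset.sum_sub_distrib]
  refine Finset.sum_congr rfl fun i _ => ?_
  rw [integral_sub (hF.mono_set_ae (h.ae_le i)) (integrableOn_const (h.measure_ne_top hΩ i)),
    setIntegral_const, smul_eq_mul]

theorem exists_measurePreserving [AddCommMonoid α] [MeasurableAdd₂ α] {B : ι → Set α}
    (hA : IsAEPartition μ Ω A) (hB : IsAEPartition μ Ω B) {τ : ι → α → α}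
    (hτ : ∀ i, Measurable (τ i)) (hτB : ∀ i, (μ.restrict (A i)).map (τ i) = μ.restrict (B i)) :
    ∃ s : α → α, MeasurePreserving s (μ.restrict Ω) (μ.restrict Ω) ∧
      ∀ i, s =ᵐ[μ.restrict (A i)] τ i := by
  classical
  obtain ⟨t, htm, ht0, htd⟩ := exists_null_pairwise_disjoint_sdiff hA.aedisjoint
  set s : α → α := fun x => ∑ i, (A i \ t i).indicator (τ i) x
  have hs : Measurable s :=
    Finset.measurable_sum _ fun i _ => (hτ i).indicator ((hA.measurableSet i).diff (htm i))
  have hsτ i : s =ᵐ[μ.restrict (A i)] τ i := by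
    have h0 : ∀ᵐ x ∂μ.restrict (A i), x ∉ t i :=
      ae_restrict_of_ae (measure_eq_zero_iff_ae_notMem.1 (ht0 i))
    filter_upwards [ae_restrict_mem (hA.measurableSet i), h0] with x hxA hxt
    have hx : x ∈ A i \ t i := ⟨hxA, hxt⟩
    dsimp only [s]
    rw [Finset.sum_eq_single i (fun j _ hji =>
      indicator_of_notMem (fun hxj => disjoint_left.1 (htd hji) hxj hx) _) (by simp)]
    exact indicator_of_mem hx _
  refine ⟨s, ⟨hs, ?_⟩, hsτ⟩
  calc (μ.restrict Ω).map s = Measure.sum fun i => (μ.restrict (A i)).map s := by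
        rw [hA.restrict_eq_sum, Measure.map_sum hs.aemeasurable]
    _ = Measure.sum fun i => μ.restrict (B i) := by
        simp_rw [Measure.map_congr (hsτ _), hτB]
    _ = μ.restrict Ω := hB.restrict_eq_sum.symm

end IsAEPartition

end Partition

theorem MeasureTheory.Measure.addHaar_setOf_inner_eq {E : Type*} [NormedAddCommGroup E]
    [InnerProductSpace ℝ E] [FiniteDimensional ℝ E] [MeasurableSpace E] [BorelSpace E]
    (μ : Measure E) [μ.IsAddHaarMeasure] {v : E} (hv : v ≠ 0) (r : ℝ) :
    μ {x | ⟪v, x⟫ = r} = 0 := by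
  rcases eq_empty_or_nonempty {x | ⟪v, x⟫ = r} with h | ⟨x₀, hx₀⟩
  · rw [h, measure_empty]
  refine measure_mono_null (fun x hx => ?_)
    (Measure.addHaar_affineSubspace μ (AffineSubspace.mk' x₀ (ℝ ∙ v)ᗮ) fun h => hv ?_)
  · rw [SetLike.mem_coe, AffineSubspace.mem_mk', vsub_eq_sub,
      Submodule.mem_orthogonal_singleton_iff_inner_right, inner_sub_right, hx, hx₀, sub_self]
  · have := congrArg AffineSubspace.direction h
    rwa [AffineSubspace.direction_mk', AffineSubspace.direction_top,
      Submodule.orthogonal_eq_top_iff, Submodule.span_singleton_eq_bot] at this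

section Laguerre

variable {d N : ℕ} (M : Fin N → EuclideanSpace ℝ (Fin d)) (ψ : Fin N → ℝ)

lemma isClosed_lag (i : Fin N) : IsClosed (Lag M ψ i) := by
  simp only [Lag, ofPred_forall]
  exact isClosed_iInter fun j => isClosed_le (by fun_prop) (by fun_prop)

lemma iUnion_lag [NeZero N] : ⋃ i, Lag M ψ i = univ :=
  eq_univ_of_forall fun x => mem_iUnion.2 (Finite.exists_min fun j => ‖x - M j‖ ^ 2 + ψ j)

/-- Two Laguerre cells with distinct sites meet inside a hyperplane. -/
lemma volume_lag_inter_lag (hM : Function.Injective M) {i j : Fin N} (hij : i ≠ j) :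
    volume (Lag M ψ i ∩ Lag M ψ j) = 0 := by
  refine measure_mono_null (fun x ⟨hxi, hxj⟩ => ?_) (Measure.addHaar_setOf_inner_eq volume
    (sub_ne_zero.2 (hM.ne hij.symm)) ((‖M j‖ ^ 2 + ψ j - ‖M i‖ ^ 2 - ψ i) / 2))
  have heq := le_antisymm (hxi j) (hxj i)
  rw [norm_sub_sq_real, norm_sub_sq_real] at heq
  rw [mem_ofPred_eq, inner_sub_left, real_inner_comm x (M j), real_inner_comm x (M i)]
  linarith

lemma isAEPartition_lag_inter [NeZero N] (hM : Function.Injective M)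
    {Ω : Set (EuclideanSpace ℝ (Fin d))} (hΩ : MeasurableSet Ω) :
    IsAEPartition volume Ω fun i => Lag M ψ i ∩ Ω where
  measurableSet i := (isClosed_lag M ψ i).measurableSet.inter hΩ
  aedisjoint _ _ hij :=
    measure_mono_null (inter_subset_inter inter_subset_left inter_subset_left)
      (volume_lag_inter_lag M ψ hM hij)
  iUnion_ae_eq := .of_eq (by rw [← iUnion_inter, iUnion_lag, univ_inter])

/-- The Kantorovich potential dual to the weights `ψ`. -/
def lagPotential (y : EuclideanSpace ℝ (Fin d)) : ℝ :=
  ⨅ j, ‖y - M j‖ ^ 2 + ψ j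

lemma lagPotential_le (y : EuclideanSpace ℝ (Fin d)) (j : Fin N) :
    lagPotential M ψ y ≤ ‖y - M j‖ ^ 2 + ψ j :=
  ciInf_le (Finite.bddBelow_range _) j

lemma lagPotential_eq_of_mem_lag {y : EuclideanSpace ℝ (Fin d)} {i : Fin N}
    (hy : y ∈ Lag M ψ i) : lagPotential M ψ y = ‖y - M i‖ ^ 2 + ψ i :=
  have : Nonempty (Fin N) := ⟨i⟩
  le_antisymm (lagPotential_le M ψ y i) (le_ciInf hy)

lemma continuous_lagPotential [NeZero N] : Continuous (lagPotential M ψ) := by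
  show Continuous fun y => ⨅ j, ‖y - M j‖ ^ 2 + ψ j
  simpa only [← Finset.inf'_univ_eq_ciInf] using
    Continuous.finset_inf'_apply (f := fun j y => ‖y - M j‖ ^ 2 + ψ j) Finset.univ_nonempty
      fun j _ => by fun_prop

end Laguerre

namespace MeasureTheory.Lp

variable {α E : Type*} [MeasurableSpace α] {μ : Measure α} [NormedAddCommGroup E]

lemma dist_sq_eq_integral [InnerProductSpace ℝ E] (f g : Lp E 2 μ) :
    dist f g ^ 2 = ∫ x, ‖f x - g x‖ ^ 2 ∂μ := by
  rw [_root_.dist_eq_norm, ← real_inner_self_eq_norm_sq, L2.inner_def]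
  refine integral_congr_ae ?_
  filter_upwards [coeFn_sub f g] with x hx
  rw [hx, Pi.sub_apply, real_inner_self_eq_norm_sq]

lemma integrable_norm_sub_sq (f g : Lp E 2 μ) : Integrable (fun x => ‖f x - g x‖ ^ 2) μ := by
  refine ((Lp.memLp (f - g)).integrable_norm_pow two_ne_zero).congr ?_
  filter_upwards [coeFn_sub f g] with x hx
  rw [hx, Pi.sub_apply]

end MeasureTheory.Lp

section SemiDiscreteTransport

variable {d N : ℕ} {Ω : Set (EuclideanSpace ℝ (Fin d))}
  {ω L : Fin N → Set (EuclideanSpace ℝ (Fin d))} {M : Fin N → EuclideanSpace ℝ (Fin d)}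
  {m : EuclideanSpace ℝ (Fin d) → EuclideanSpace ℝ (Fin d)}

theorem sum_integral_le_integral_norm_sub_sq [NeZero N] (ψ : Fin N → ℝ)
    (hΩ : Bornology.IsBounded Ω) (hω : IsAEPartition volume Ω ω)
    (hm : ∀ i, ∀ᵐ x ∂volume.restrict (ω i), m x = M i) (hL : IsAEPartition volume Ω L)
    (hLlag : ∀ i, L i ⊆ Lag M ψ i) (hvol : ∀ i, volume (ω i) = volume (L i))
    {f : EuclideanSpace ℝ (Fin d) → EuclideanSpace ℝ (Fin d)}
    (hf : AEMeasurable f (volume.restrict Ω)) (hfΩ : (volume.restrict Ω).map f = volume.restrict Ω)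
    (hint : IntegrableOn (fun x => ‖m x - f x‖ ^ 2) Ω) :
    ∑ i, ∫ y in L i, ‖y - M i‖ ^ 2 ≤ ∫ x in Ω, ‖m x - f x‖ ^ 2 := by
  set φ := lagPotential M ψ
  have hφc : Continuous φ := continuous_lagPotential M ψ
  have hΩfin : volume Ω ≠ ⊤ := hΩ.measure_lt_top.ne
  have hφ : IntegrableOn φ Ω :=
    (hφc.continuousOn.integrableOn_compact hΩ.isCompact_closure).mono_set subset_closure
  have hφf : IntegrableOn (fun x => φ (f x)) Ω := by
    rw [IntegrableOn, ← hfΩ] at hφ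
    exact (integrable_map_measure hφc.aestronglyMeasurable hf).1 hφ
  have hpointwise i : ∫ x in ω i, (φ (f x) - ψ i) ≤ ∫ x in ω i, ‖m x - f x‖ ^ 2 := by
    refine integral_mono_ae ((hφf.mono_set_ae (hω.ae_le i)).sub
      (integrableOn_const (hω.measure_ne_top hΩfin i))) (hint.mono_set_ae (hω.ae_le i)) ?_
    filter_upwards [hm i] with x hx
    rw [hx, norm_sub_rev]
    linarith [lagPotential_le M ψ (f x) i]
  calc ∑ i, ∫ y in L i, ‖y - M i‖ ^ 2 = ∑ i, ∫ y in L i, (φ y - ψ i) :=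
        Finset.sum_congr rfl fun i _ => setIntegral_congr_fun (hL.measurableSet i) fun y hy => by
          simp only [φ, lagPotential_eq_of_mem_lag M ψ (hLlag i hy), add_sub_cancel_right]
    _ = (∫ y in Ω, φ y) - ∑ i, volume.real (L i) * ψ i := hL.sum_integral_sub_const hφ hΩfin ψ
    _ = (∫ x in Ω, φ (f x)) - ∑ i, volume.real (ω i) * ψ i := by
        rw [← integral_map hf (hfΩ ▸ hφc.aestronglyMeasurable), hfΩ]
        simp_rw [measureReal_def, hvol]
    _ = ∑ i, ∫ x in ω i, (φ (f x) - ψ i) := (hω.sum_integral_sub_const hφf hΩfin ψ).symm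
    _ ≤ ∑ i, ∫ x in ω i, ‖m x - f x‖ ^ 2 := Finset.sum_le_sum fun i _ => hpointwise i
    _ = ∫ x in Ω, ‖m x - f x‖ ^ 2 := (hω.integral_eq_sum hint).symm

theorem integral_norm_sub_sq_eq_sum (hω : IsAEPartition volume Ω ω)
    (hm : ∀ i, ∀ᵐ x ∂volume.restrict (ω i), m x = M i)
    {τ : Fin N → EuclideanSpace ℝ (Fin d) → EuclideanSpace ℝ (Fin d)} (hτ : ∀ i, Measurable (τ i))
    (hτL : ∀ i, (volume.restrict (ω i)).map (τ i) = volume.restrict (L i))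
    {s : EuclideanSpace ℝ (Fin d) → EuclideanSpace ℝ (Fin d)}
    (hs : ∀ i, s =ᵐ[volume.restrict (ω i)] τ i)
    (hint : IntegrableOn (fun x => ‖m x - s x‖ ^ 2) Ω) :
    ∫ x in Ω, ‖m x - s x‖ ^ 2 = ∑ i, ∫ y in L i, ‖y - M i‖ ^ 2 := by
  rw [hω.integral_eq_sum hint]
  refine Finset.sum_congr rfl fun i _ => ?_
  calc ∫ x in ω i, ‖m x - s x‖ ^ 2 = ∫ x in ω i, ‖τ i x - M i‖ ^ 2 := by
        refine integral_congr_ae ?_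
        filter_upwards [hm i, hs i] with x hmx hsx
        rw [hmx, hsx, norm_sub_rev]
    _ = ∫ y in L i, ‖y - M i‖ ^ 2 := by
        rw [← hτL i, integral_map (hτ i).aemeasurable (by fun_prop)]

theorem exists_mem_MPmaps_dist_sq_eq (hΩ : Bornology.IsBounded Ω) (hΩm : MeasurableSet Ω)
    (hω : IsAEPartition volume Ω ω) (hL : IsAEPartition volume Ω L)
    (hvol : ∀ i, volume (ω i) = volume (L i))
    (m : Lp (EuclideanSpace ℝ (Fin d)) 2 (volume.restrict Ω))
    (hm : ∀ i, ∀ᵐ x ∂volume.restrict (ω i), m x = M i) :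
    ∃ s ∈ MPmaps Ω, dist m s ^ 2 = ∑ i, ∫ y in L i, ‖y - M i‖ ^ 2 := by
  have hΩfin : volume Ω ≠ ⊤ := hΩ.measure_lt_top.ne
  choose τ hτ hτL using fun i =>
    Measure.exists_measurable_map_restrict_eq volume (hvol i) (hω.measure_ne_top hΩfin i)
  obtain ⟨s, hs, hsτ⟩ := hω.exists_measurePreserving hL hτ hτL
  have : IsFiniteMeasure (volume.restrict Ω) := isFiniteMeasure_restrict.2 hΩfin
  obtain ⟨R, hR⟩ := hΩ.exists_norm_le
  have hid : MemLp id 2 (volume.restrict Ω) :=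
    MemLp.of_bound aestronglyMeasurable_id R (ae_restrict_of_forall_mem hΩm hR)
  have hsL2 : MemLp s 2 (volume.restrict Ω) := hid.comp_measurePreserving hs
  have hS : hsL2.toLp s =ᵐ[volume.restrict Ω] s := hsL2.coeFn_toLp
  have hdiff : (fun x => ‖m x - hsL2.toLp s x‖ ^ 2) =ᵐ[volume.restrict Ω]
      fun x => ‖m x - s x‖ ^ 2 := by
    filter_upwards [hS] with x hx
    rw [hx]
  refine ⟨hsL2.toLp s, (Measure.map_congr hS).trans hs.map_eq, ?_⟩
  rw [Lp.dist_sq_eq_integral, integral_congr_ae hdiff]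
  exact integral_norm_sub_sq_eq_sum hω hm hτ hτL hsτ ((Lp.integrable_norm_sub_sq _ _).congr hdiff)

end SemiDiscreteTransport

theorem stmt11_general {d N : ℕ} (hN : 0 < N)
    (Ω : Set (EuclideanSpace ℝ (Fin d))) (hΩo : IsOpen Ω)
    (hΩb : Bornology.IsBounded Ω)
    (ω : Fin N → Set (EuclideanSpace ℝ (Fin d)))
    (hωmeas : ∀ i, MeasurableSet (ω i))
    (hωsub : ∀ i, ω i ⊆ Ω)
    (hωdisj : Pairwise fun i j => volume (ω i ∩ ω j) = 0)
    (hωcover : volume (Ω \ ⋃ i, ω i) = 0)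
    (hωvol : ∀ i, volume (ω i) = volume Ω / N)
    (m : Lp (EuclideanSpace ℝ (Fin d)) 2 (volume.restrict Ω))
    (Mi : Fin N → EuclideanSpace ℝ (Fin d)) (hMi : Function.Injective Mi)
    (hm : ∀ i, ∀ᵐ x ∂((volume.restrict Ω).restrict (ω i)), m x = Mi i)
    (ψ : Fin N → ℝ)
    (hψ : ∀ i, volume (Lag Mi ψ i ∩ Ω) = volume Ω / N) :
    Metric.infDist m (MPmaps Ω) ^ 2
      = ∑ i : Fin N, ∫ x in Lag Mi ψ i ∩ Ω, ‖x - Mi i‖ ^ 2 := by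
  have : NeZero N := ⟨hN.ne'⟩
  have hΩ : MeasurableSet Ω := hΩo.measurableSet
  have hω : IsAEPartition volume Ω ω :=
    ⟨hωmeas, hωdisj, ae_eq_set.2 ⟨by rw [sdiff_eq_empty.2 (iUnion_subset hωsub), measure_empty],
      hωcover⟩⟩
  have hL := isAEPartition_lag_inter Mi ψ hMi hΩ
  have hm' i : ∀ᵐ x ∂volume.restrict (ω i), m x = Mi i := by
    simpa only [Measure.restrict_restrict (hωmeas i), inter_eq_left.2 (hωsub i)] using hm i
  have hvol i : volume (ω i) = volume (Lag Mi ψ i ∩ Ω) := (hωvol i).trans (hψ i).symm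
  obtain ⟨s, hs, hms⟩ := exists_mem_MPmaps_dist_sq_eq hΩb hΩ hω hL hvol m hm'
  have hmin : ∀ f ∈ MPmaps Ω, dist m s ≤ dist m f := fun f hf => by
    rw [← pow_le_pow_iff_left₀ dist_nonneg dist_nonneg two_ne_zero, hms, Lp.dist_sq_eq_integral]
    exact sum_integral_le_integral_norm_sub_sq ψ hΩb hω hm' hL (fun i => inter_subset_left) hvol
      (Lp.aestronglyMeasurable f).aemeasurable hf (Lp.integrable_norm_sub_sq m f)
  rw [le_antisymm (Metric.infDist_le_dist_of_mem hs) ((Metric.le_infDist ⟨s, hs⟩).2 hmin), hms]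

/-- **Squared distance to the measure-preserving maps via Laguerre cells.**
Let `Ω ⊂ ℝ^d` be a bounded connected open set with an equal-volume partition
`(ω_i)_{1≤i≤N}`, let `m ∈ M_N` take the pairwise distinct values `M_i` on `ω_i`, and let
`ψ ∈ ℝ^N` be such that each Laguerre cell `L_i = Lag_i(M,ψ) ∩ Ω` has measure `Leb(Ω)/N`.
Then `d_S(m)² = Σ_i ∫_{L_i} ‖x − M_i‖² dx`. -/
theorem stmt11 {d N : ℕ} (hN : 0 < N)
    (Ω : Set (EuclideanSpace ℝ (Fin d))) (hΩo : IsOpen Ω)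
    (hΩb : Bornology.IsBounded Ω) (hΩc : IsConnected Ω)
    (ω : Fin N → Set (EuclideanSpace ℝ (Fin d)))
    (hωmeas : ∀ i, MeasurableSet (ω i))
    (hωsub : ∀ i, ω i ⊆ Ω)
    (hωdisj : Pairwise fun i j => volume (ω i ∩ ω j) = 0)
    (hωcover : volume (Ω \ ⋃ i, ω i) = 0)
    (hωvol : ∀ i, volume (ω i) = volume Ω / N)
    (m : Lp (EuclideanSpace ℝ (Fin d)) 2 (volume.restrict Ω))
    (Mi : Fin N → EuclideanSpace ℝ (Fin d)) (hMi : Function.Injective Mi)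
    (hm : ∀ i, ∀ᵐ x ∂((volume.restrict Ω).restrict (ω i)), m x = Mi i)
    (ψ : Fin N → ℝ)
    (hψ : ∀ i, volume (Lag Mi ψ i ∩ Ω) = volume Ω / N) :
    Metric.infDist m (MPmaps Ω) ^ 2
      = ∑ i : Fin N, ∫ x in Lag Mi ψ i ∩ Ω, ‖x - Mi i‖ ^ 2 :=
  stmt11_general hN Ω hΩo hΩb ω hωmeas hωsub hωdisj hωcover hωvol m Mi hMi hm ψ hψ
end
end
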